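/- arXiv:0807.1645 — 2 statements merged into one kernel-verified Lean document; each statement's English description precedes it below -/
import Mathlib

section
/- Let $U,V$ be vector spaces over an algebraically closed field $k$ of dimensions $r,s$ respectively, let $B \subseteq U$ be a nonzero subspace of codimension $b < r$ and $A \subseteq V$ a subspace of dimension $a < s$. Let $W \subseteq \mathrm{Hom}(U,V)$ be a $t$-dimensional linear subspace such that for every $u \in U$ and every $v \in V$ there exists $f \in W$ with $f(u) = v$. Then the subspace $\{f \in W : f(B) \subseteq A\}$ has dimension at most $t - r - s + a + b + 1$. -/
/-!
Restricting `W` to `B` and reducing modulo `A` gives a linear map `W → Hom(B, V ⧸ A)` with kernel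
`W ⊓ mapsInto B A`, whose image `T` is again transitive. A transitive `T ⊆ Hom(E, F)` yields the
nonsingular bilinear map `E × F* → T*`, `(u, w) ↦ (f ↦ w (f u))`, so it suffices that a bilinear
map `kᵐ × kⁿ → kᵈ` with `d ≤ m + n - 2` over an algebraically closed field has a zero `(x, y)` with
`x, y ≠ 0`: `dim T ≥ dim E + dim F - 1`.

Such a zero is a common zero in `ℙᵐ⁻¹ × ℙⁿ⁻¹` of `d` forms `b_l` of bidegree `(1, 1)`. If there is
none, the Nullstellensatz puts every `(xᵢ yⱼ)ᴹ` in the ideal `(b)`, hence all of the space `S_c` of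
forms of bidegree `(c, c)` for `c ≥ C₀`. Then `S_{C₀+e} = Σ b^α S_{C₀}` over the monomials `α` of
degree `e` in `d` variables, so `dim S_c = O(c^(d-1))`, while `S_c` contains `≳ c^(m+n-2)`
monomials.
-/

open Module

/-- The subspace of linear maps sending the subspace `B` into the subspace `A`. -/
def mapsInto {k U V : Type*} [Field k] [AddCommGroup U] [Module k U]
    [AddCommGroup V] [Module k V] (B : Submodule k U) (A : Submodule k V) :
    Submodule k (U →ₗ[k] V) where
  carrier := {f | ∀ x ∈ B, f x ∈ A}
  add_mem' := fun hf hg x hx => by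
    simpa using A.add_mem (hf x hx) (hg x hx)
  zero_mem' := fun x _ => by simpa using A.zero_mem
  smul_mem' := fun c f hf x hx => by simpa using A.smul_mem c (hf x hx)

lemma Submodule.finrank_finset_sup_le_sum {K V ι : Type*} [DivisionRing K]
    [AddCommGroup V] [Module K V] (p : ι → Submodule K V) [∀ i, FiniteDimensional K (p i)]
    (s : Finset ι) : finrank K ↥(s.sup p) ≤ ∑ i ∈ s, finrank K (p i) := by
  classical
  induction s using Finset.induction_on with
  | empty => simp
  | insert i s hi ih =>
    rw [Finset.sup_insert, Finset.sum_insert hi]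
    exact (Submodule.finrank_add_le_finrank_add_finrank _ _).trans (by omega)

lemma Submodule.finrank_inf_ker_add_finrank_map {K V V' : Type*} [DivisionRing K]
    [AddCommGroup V] [Module K V] [AddCommGroup V'] [Module K V'] (W : Submodule K V)
    [FiniteDimensional K W] (φ : V →ₗ[K] V') :
    finrank K ↥(W ⊓ LinearMap.ker φ) + finrank K (W.map φ) = finrank K W := by
  rw [← LinearMap.range_domRestrict, ← (φ.domRestrict W).finrank_range_add_finrank_ker,
    LinearMap.ker_domRestrict, ← Submodule.finrank_map_subtype_eq, Submodule.map_comap_subtype,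
    add_comm]

lemma Nat.multichoose_le_pow {d : ℕ} (hd : 0 < d) (e : ℕ) :
    d.multichoose e ≤ (d - 1 + e) ^ (d - 1) := by
  rw [Nat.multichoose_eq, show d + e - 1 = d - 1 + e by omega, ← Nat.choose_symm_add]
  exact Nat.choose_le_pow _ _

lemma Nat.not_forall_pow_succ_le_mul_pow (A E : ℕ) :
    ¬ ∀ j, (j + 1) ^ (E + 1) ≤ A * (j + 1) ^ E := by
  intro h
  have := h A
  rw [pow_succ, mul_comm] at this
  exact absurd (Nat.le_of_mul_le_mul_right this (by positivity)) (by omega)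

lemma LinearMap.apply_eq_sum_basisFun {k ι κ N : Type*} [Field k] [Fintype ι] [Fintype κ]
    [AddCommGroup N] [Module k N] (β : (ι → k) →ₗ[k] (κ → k) →ₗ[k] N) (x : ι → k) (y : κ → k) :
    β x y = ∑ i, ∑ j, (x i * y j) • β (Pi.basisFun k ι i) (Pi.basisFun k κ j) := by
  conv_lhs => rw [← (Pi.basisFun k ι).sum_repr x, ← (Pi.basisFun k κ).sum_repr y]
  simp only [map_sum, map_smul, LinearMap.sum_apply, LinearMap.smul_apply, Pi.basisFun_repr,
    Finset.smul_sum, smul_smul, mul_comm]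
  exact Finset.sum_comm

namespace Bihomogeneous

open MvPolynomial

variable {k σ τ : Type*} [Field k]

def bidegree : σ ⊕ τ → ℕ × ℕ := Sum.elim (fun _ => (1, 0)) (fun _ => (0, 1))

variable (k σ τ) in
abbrev bihomogeneousDiag (c : ℕ) : Submodule k (MvPolynomial (σ ⊕ τ) k) :=
  weightedHomogeneousSubmodule k bidegree (c, c)

lemma weight_bidegree [Fintype σ] [Fintype τ] (μ : σ ⊕ τ →₀ ℕ) :
    Finsupp.weight bidegree μ = (∑ i, μ (.inl i), ∑ j, μ (.inr j)) := by
  rw [Finsupp.weight_apply, Finsupp.sum_fintype _ _ (by simp), Fintype.sum_sum_type]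
  ext <;> simp [bidegree, Prod.fst_sum, Prod.snd_sum]

lemma X_mul_X_mem_bihomogeneousDiag (i : σ) (j : τ) :
    X (.inl i) * X (.inr j) ∈ bihomogeneousDiag k σ τ 1 :=
  (isWeightedHomogeneous_X k bidegree (.inl i)).mul (isWeightedHomogeneous_X k bidegree (.inr j))

instance [Fintype σ] [Fintype τ] (c : ℕ) : FiniteDimensional k (bihomogeneousDiag k σ τ c) := by
  refine Submodule.finiteDimensional_of_le (S₂ := restrictTotalDegree (σ ⊕ τ) k (c + c)) ?_
  intro p hp
  rw [mem_restrictTotalDegree]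
  refine Finset.sup_le fun μ hμ => ?_
  have hw := hp (mem_support_iff.1 hμ)
  rw [weight_bidegree, Prod.mk.injEq] at hw
  rw [Finsupp.sum_fintype _ _ (by simp), Fintype.sum_sum_type, hw.1, hw.2]

attribute [local instance] MvPolynomial.weightedGradedAlgebra in
lemma weightedHomogeneousComponent_mul_of_mem_one {b : MvPolynomial (σ ⊕ τ) k}
    (hb : b ∈ bihomogeneousDiag k σ τ 1) (g : MvPolynomial (σ ⊕ τ) k) (c : ℕ) :
    weightedHomogeneousComponent bidegree (c + 1, c + 1) (g * b) =
      weightedHomogeneousComponent bidegree (c, c) g * b := by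
  classical
  simp_rw [← weightedDecomposition.decompose'_apply]
  simpa using DirectSum.coe_decompose_mul_of_right_mem_of_le
    (weightedHomogeneousSubmodule k bidegree) (a := g) (n := (c + 1, c + 1)) hb (by simp)

lemma mem_iSup_map_mulRight_of_mem_span {ι : Type*} [Fintype ι]
    {b : ι → MvPolynomial (σ ⊕ τ) k} (hb : ∀ l, b l ∈ bihomogeneousDiag k σ τ 1) {c : ℕ}
    {p : MvPolynomial (σ ⊕ τ) k} (hp : p ∈ bihomogeneousDiag k σ τ (c + 1))
    (hpb : p ∈ Ideal.span (Set.range b)) :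
    p ∈ ⨆ l, (bihomogeneousDiag k σ τ c).map (LinearMap.mulRight k (b l)) := by
  obtain ⟨g, rfl⟩ := Ideal.mem_span_range_iff_exists_fun.mp hpb
  rw [← IsWeightedHomogeneous.weightedHomogeneousComponent_same hp, map_sum]
  refine Submodule.sum_mem _ fun l _ => ?_
  rw [weightedHomogeneousComponent_mul_of_mem_one (hb l)]
  exact Submodule.mem_iSup_of_mem l ⟨_, weightedHomogeneousComponent_mem _ _ _, rfl⟩

lemma exists_pow_mem_span_of_eval_eq_zero [IsAlgClosed k] [Finite σ] [Finite τ] {ι : Type*}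
    (b : ι → MvPolynomial (σ ⊕ τ) k)
    (hb : ∀ z : σ ⊕ τ → k, (∀ l, eval z (b l) = 0) → (∃ i, z (.inl i) ≠ 0) →
      ∀ j, z (.inr j) = 0) :
    ∃ M, ∀ i j, (X (.inl i) * X (.inr j) : MvPolynomial (σ ⊕ τ) k) ^ M ∈
      Ideal.span (Set.range b) := by
  let J : Ideal (MvPolynomial (σ ⊕ τ) k) :=
    Ideal.span (Set.range fun p : σ × τ => X (.inl p.1) * X (.inr p.2))
  have hJ : J ≤ (Ideal.span (Set.range b)).radical := by
    rw [← MvPolynomial.vanishingIdeal_zeroLocus_eq_radical (K := k), Ideal.span_le]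
    rintro _ ⟨⟨i, j⟩, rfl⟩
    rw [SetLike.mem_coe, mem_vanishingIdeal_iff]
    intro z hz
    have hzb (l : ι) : eval z (b l) = 0 := by simpa using hz _ (Ideal.subset_span ⟨l, rfl⟩)
    by_cases hx : ∃ i, z (.inl i) ≠ 0
    · simp [hb z hzb hx j]
    · push Not at hx
      simp [hx i]
  obtain ⟨M, hM⟩ :=
    Ideal.exists_pow_le_of_le_radical_of_fg hJ (Submodule.fg_span (Set.finite_range _))
  exact ⟨M, fun i j => hM (Ideal.pow_mem_pow (Ideal.subset_span (Set.mem_range_self (i, j))) M)⟩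

lemma bihomogeneousDiag_le_of_pow_mem [Fintype σ] [Fintype τ] [Nonempty σ] [Nonempty τ]
    {I : Ideal (MvPolynomial (σ ⊕ τ) k)} {M : ℕ} (hI : ∀ i j, (X (.inl i) * X (.inr j)) ^ M ∈ I)
    {c : ℕ} (hc : (Fintype.card σ + Fintype.card τ) * M ≤ c) :
    bihomogeneousDiag k σ τ c ≤ I.restrictScalars k := by
  intro p hp
  rw [Submodule.restrictScalars_mem, ← support_sum_monomial_coeff p]
  refine Ideal.sum_mem _ fun μ hμ => ?_
  have hw := hp (mem_support_iff.1 hμ)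
  rw [weight_bidegree, Prod.mk.injEq] at hw
  obtain ⟨i, -, hi⟩ := Finset.exists_le_of_sum_le (f := fun _ => M) (g := fun i => μ (.inl i))
    Finset.univ_nonempty <| by
      simp only [Finset.sum_const, Finset.card_univ, smul_eq_mul, hw.1]
      nlinarith
  obtain ⟨j, -, hj⟩ := Finset.exists_le_of_sum_le (f := fun _ => M) (g := fun j => μ (.inr j))
    Finset.univ_nonempty <| by
      simp only [Finset.sum_const, Finset.card_univ, smul_eq_mul, hw.2]
      nlinarith
  have hle : Finsupp.single (.inl i) M + Finsupp.single (.inr j) M ≤ μ := by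
    rintro (i' | j')
    · by_cases h : i = i' <;> simp_all
    · by_cases h : j = j' <;> simp_all
  obtain ⟨ν, hν⟩ := le_iff_exists_add.1 hle
  have : monomial μ (coeff μ p) = (X (.inl i) * X (.inr j)) ^ M * monomial ν (coeff μ p) := by
    rw [mul_pow, X_pow_eq_monomial, X_pow_eq_monomial, monomial_mul, monomial_mul, one_mul,
      one_mul, hν]
  rw [this]
  exact Ideal.mul_mem_right _ _ (hI i j)

lemma bihomogeneousDiag_add_le_iSup_sym {ι : Type*} [Fintype ι]
    {b : ι → MvPolynomial (σ ⊕ τ) k} (hb : ∀ l, b l ∈ bihomogeneousDiag k σ τ 1) {C₀ : ℕ}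
    (hC₀ : ∀ c ≥ C₀, bihomogeneousDiag k σ τ c ≤ (Ideal.span (Set.range b)).restrictScalars k)
    (e : ℕ) :
    bihomogeneousDiag k σ τ (C₀ + e) ≤ ⨆ s : Sym ι e,
      (bihomogeneousDiag k σ τ C₀).map (LinearMap.mulRight k ((s : Multiset ι).map b).prod) := by
  induction e with
  | zero => exact fun p hp => Submodule.mem_iSup_of_mem Sym.nil ⟨p, hp, by simp⟩
  | succ e ih =>
    have hstep : bihomogeneousDiag k σ τ (C₀ + e + 1) ≤
        ⨆ l, (bihomogeneousDiag k σ τ (C₀ + e)).map (LinearMap.mulRight k (b l)) := fun p hp =>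
      mem_iSup_map_mulRight_of_mem_span hb hp (hC₀ _ (by omega) hp)
    refine hstep.trans (iSup_le fun l => ?_)
    rw [Submodule.map_le_iff_le_comap]
    refine ih.trans (iSup_le fun s => ?_)
    rintro _ ⟨q, hq, rfl⟩
    refine Submodule.mem_iSup_of_mem (l ::ₛ s) ⟨q, hq, ?_⟩
    simp only [Sym.coe_cons, Multiset.map_cons, Multiset.prod_cons, LinearMap.mulRight_apply]
    ring

lemma finrank_bihomogeneousDiag_add_le [Fintype σ] [Fintype τ] {ι : Type*} [Fintype ι]
    {b : ι → MvPolynomial (σ ⊕ τ) k} (hb : ∀ l, b l ∈ bihomogeneousDiag k σ τ 1) {C₀ : ℕ}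
    (hC₀ : ∀ c ≥ C₀, bihomogeneousDiag k σ τ c ≤ (Ideal.span (Set.range b)).restrictScalars k)
    (e : ℕ) :
    finrank k (bihomogeneousDiag k σ τ (C₀ + e)) ≤
      (Fintype.card ι).multichoose e * finrank k (bihomogeneousDiag k σ τ C₀) := by
  classical
  calc finrank k (bihomogeneousDiag k σ τ (C₀ + e))
      ≤ finrank k ↥((Finset.univ : Finset (Sym ι e)).sup fun s =>
          (bihomogeneousDiag k σ τ C₀).map
            (LinearMap.mulRight k ((s : Multiset ι).map b).prod)) := by
        rw [Finset.sup_univ_eq_iSup]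
        exact Submodule.finrank_mono (bihomogeneousDiag_add_le_iSup_sym hb hC₀ e)
    _ ≤ ∑ s : Sym ι e, finrank k (bihomogeneousDiag k σ τ C₀) :=
        (Submodule.finrank_finset_sup_le_sum _ _).trans
          (Finset.sum_le_sum fun _ _ => Submodule.finrank_map_le _ _)
    _ = _ := by simp [Sym.card_sym_eq_multichoose]

def completeTo (c : ℕ) {m q : ℕ} (α : Fin m → Fin (q + 1)) : Fin (m + 1) → ℕ :=
  Fin.snoc (fun i => (α i : ℕ)) (c - ∑ i, (α i : ℕ))

lemma sum_completeTo {m q c : ℕ} (hc : m * q ≤ c) (α : Fin m → Fin (q + 1)) :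
    ∑ i, completeTo c α i = c := by
  have : ∑ i, (α i : ℕ) ≤ m * q := by
    simpa using Finset.sum_le_sum fun i (_ : i ∈ Finset.univ) => Fin.is_le (α i)
  rw [Fin.sum_univ_castSucc]
  simp only [completeTo, Fin.snoc_castSucc, Fin.snoc_last]
  omega

lemma completeTo_injective (c : ℕ) {m q : ℕ} :
    Function.Injective (completeTo c : (Fin m → Fin (q + 1)) → Fin (m + 1) → ℕ) :=
  fun α α' h => funext fun i => Fin.ext <| by simpa [completeTo] using congrFun h i.castSucc

lemma pow_le_finrank_bihomogeneousDiag {m n q c : ℕ} (hm : m * q ≤ c) (hn : n * q ≤ c) :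
    (q + 1) ^ (m + n) ≤ finrank k (bihomogeneousDiag k (Fin (m + 1)) (Fin (n + 1)) c) := by
  let μ : (Fin m → Fin (q + 1)) × (Fin n → Fin (q + 1)) → (Fin (m + 1) ⊕ Fin (n + 1) →₀ ℕ) :=
    fun αβ => Finsupp.equivFunOnFinite.symm (Sum.elim (completeTo c αβ.1) (completeTo c αβ.2))
  have hμ : Function.Injective μ := by
    rintro ⟨α, β⟩ ⟨α', β'⟩ h
    simp only [μ, EmbeddingLike.apply_eq_iff_eq] at h
    rw [completeTo_injective c (funext fun i => congrFun h (.inl i)),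
      completeTo_injective c (funext fun j => congrFun h (.inr j))]
  have hw (αβ) : Finsupp.weight bidegree (μ αβ) = (c, c) := by
    simp [weight_bidegree, μ, sum_completeTo hm, sum_completeTo hn]
  let v (αβ) : bihomogeneousDiag k (Fin (m + 1)) (Fin (n + 1)) c :=
    ⟨monomial (μ αβ) 1, isWeightedHomogeneous_monomial _ _ _ (hw αβ)⟩
  have hv : LinearIndependent k v := LinearIndependent.of_comp (Submodule.subtype _) <| by
    simpa [Function.comp_def, v] using (basisMonomials _ k).linearIndependent.comp μ hμ
  simpa [pow_add] using hv.fintype_card_le_finrank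

theorem exists_common_zero [IsAlgClosed k] {m n d : ℕ} (hd : d ≤ m + n)
    (b : Fin d → MvPolynomial (Fin (m + 1) ⊕ Fin (n + 1)) k)
    (hb : ∀ l, b l ∈ bihomogeneousDiag k _ _ 1) :
    ∃ z : Fin (m + 1) ⊕ Fin (n + 1) → k,
      (∀ l, eval z (b l) = 0) ∧ (∃ i, z (.inl i) ≠ 0) ∧ ∃ j, z (.inr j) ≠ 0 := by
  obtain rfl | hd₀ := Nat.eq_zero_or_pos d
  · exact ⟨fun _ => 1, finZeroElim, ⟨0, one_ne_zero⟩, ⟨0, one_ne_zero⟩⟩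
  by_contra! hz
  obtain ⟨M, hM⟩ := exists_pow_mem_span_of_eval_eq_zero b hz
  obtain ⟨E, hE⟩ : ∃ E, m + n = E + 1 := ⟨m + n - 1, by omega⟩
  set C₀ := (E + 3) * M
  have hC₀ : ∀ c ≥ C₀, bihomogeneousDiag k _ _ c ≤ (Ideal.span (Set.range b)).restrictScalars k :=
    fun c hc => bihomogeneousDiag_le_of_pow_mem hM <| by
      rw [Fintype.card_fin, Fintype.card_fin, show m + 1 + (n + 1) = E + 3 by omega]
      exact hc
  set K := finrank k (bihomogeneousDiag k (Fin (m + 1)) (Fin (n + 1)) C₀)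
  refine Nat.not_forall_pow_succ_le_mul_pow ((E + 1) ^ E * K) E fun j => calc
    (j + 1) ^ (E + 1)
      ≤ finrank k (bihomogeneousDiag k (Fin (m + 1)) (Fin (n + 1)) (C₀ + (E + 1) * j)) := by
      rw [← hE]
      exact pow_le_finrank_bihomogeneousDiag
        ((Nat.mul_le_mul_right j (Nat.le_add_right m n)).trans (Nat.le_add_left _ _))
        ((Nat.mul_le_mul_right j (Nat.le_add_left n m)).trans (Nat.le_add_left _ _))
    _ ≤ d.multichoose ((E + 1) * j) * K := by
      simpa using finrank_bihomogeneousDiag_add_le hb hC₀ ((E + 1) * j)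
    _ ≤ ((E + 1) * (j + 1)) ^ E * K := by
      gcongr
      calc d.multichoose ((E + 1) * j) ≤ (d - 1 + (E + 1) * j) ^ (d - 1) :=
            Nat.multichoose_le_pow hd₀ _
        _ ≤ ((E + 1) * (j + 1)) ^ (d - 1) := by gcongr; rw [mul_add_one]; omega
        _ ≤ ((E + 1) * (j + 1)) ^ E := Nat.pow_le_pow_right (by positivity) (by omega)
    _ = (E + 1) ^ E * K * (j + 1) ^ E := by rw [mul_pow]; ring

theorem exists_bilinear_apply_eq_zero [IsAlgClosed k] {m n d : ℕ} (hd : d ≤ m + n)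
    (β : (Fin (m + 1) → k) →ₗ[k] (Fin (n + 1) → k) →ₗ[k] (Fin d → k)) :
    ∃ x ≠ 0, ∃ y ≠ 0, β x y = 0 := by
  let b (l : Fin d) : MvPolynomial (Fin (m + 1) ⊕ Fin (n + 1)) k :=
    ∑ i, ∑ j, β (Pi.basisFun k _ i) (Pi.basisFun k _ j) l • (X (.inl i) * X (.inr j))
  have hb (l : Fin d) : b l ∈ bihomogeneousDiag k _ _ 1 :=
    Submodule.sum_mem _ fun i _ => Submodule.sum_mem _ fun j _ =>
      Submodule.smul_mem _ _ (X_mul_X_mem_bihomogeneousDiag i j)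
  have heval (z : Fin (m + 1) ⊕ Fin (n + 1) → k) (l : Fin d) :
      eval z (b l) = β (fun i => z (.inl i)) (fun j => z (.inr j)) l := by
    rw [β.apply_eq_sum_basisFun]
    simp only [b, map_sum, smul_eval, eval_mul, eval_X, Finset.sum_apply, Pi.smul_apply,
      smul_eq_mul, mul_comm]
  obtain ⟨z, hz, ⟨i, hi⟩, ⟨j, hj⟩⟩ := exists_common_zero hd b hb
  refine ⟨fun i => z (.inl i), fun h => hi (congrFun h i), fun j => z (.inr j),
    fun h => hj (congrFun h j), funext fun l => ?_⟩
  rw [← heval, hz, Pi.zero_apply]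

end Bihomogeneous

section NonsingularBilinear

variable {k E F G : Type*} [Field k] [AddCommGroup E] [Module k E] [AddCommGroup F] [Module k F]
  [AddCommGroup G] [Module k G]

theorem finrank_add_finrank_le_of_nonsingular [IsAlgClosed k] [FiniteDimensional k G]
    (β : E →ₗ[k] F →ₗ[k] G) (hβ : ∀ x ≠ 0, ∀ y ≠ 0, β x y ≠ 0)
    (hE : 0 < finrank k E) (hF : 0 < finrank k F) :
    finrank k E + finrank k F ≤ finrank k G + 1 := by
  have := Module.finite_of_finrank_pos hE
  have := Module.finite_of_finrank_pos hF
  obtain ⟨m, hm⟩ : ∃ m, finrank k E = m + 1 := ⟨_, (Nat.succ_pred_eq_of_pos hE).symm⟩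
  obtain ⟨n, hn⟩ : ∃ n, finrank k F = n + 1 := ⟨_, (Nat.succ_pred_eq_of_pos hF).symm⟩
  by_contra! h
  let eE := (finBasisOfFinrankEq k E hm).equivFun
  let eF := (finBasisOfFinrankEq k F hn).equivFun
  let eG := (finBasis k G).equivFun
  obtain ⟨x, hx, y, hy, hxy⟩ := Bihomogeneous.exists_bilinear_apply_eq_zero (by omega)
    ((β.compl₁₂ eE.symm.toLinearMap eF.symm.toLinearMap).compr₂ eG.toLinearMap)
  exact hβ _ (eE.symm.map_ne_zero_iff.2 hx) _ (eF.symm.map_ne_zero_iff.2 hy)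
    (eG.map_eq_zero_iff.1 hxy)

theorem finrank_add_finrank_le_of_forall_exists_apply_eq [IsAlgClosed k]
    (T : Submodule k (E →ₗ[k] F)) (hE : 0 < finrank k E) (hF : 0 < finrank k F)
    (hT : ∀ u ≠ 0, ∀ v, ∃ f ∈ T, f u = v) :
    finrank k E + finrank k F ≤ finrank k T + 1 := by
  have := Module.finite_of_finrank_pos hE
  have := Module.finite_of_finrank_pos hF
  -- `β u w f = w (f u)`
  let β : E →ₗ[k] Dual k F →ₗ[k] Dual k T :=
    Dual.transpose ∘ₗ LinearMap.lcomp k F T.subtype ∘ₗ LinearMap.applyₗ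
  have hβ : ∀ u ≠ 0, ∀ w ≠ 0, β u w ≠ 0 := by
    intro u hu w hw hβw
    obtain ⟨v, hv⟩ : ∃ v, w v ≠ 0 := by
      by_contra! H
      exact hw (LinearMap.ext H)
    obtain ⟨f, hfT, rfl⟩ := hT u hu v
    exact hv (LinearMap.congr_fun hβw ⟨f, hfT⟩)
  simpa [Subspace.dual_finrank_eq] using
    finrank_add_finrank_le_of_nonsingular β hβ hE (by rwa [Subspace.dual_finrank_eq])

end NonsingularBilinear

section RestrictQuot

variable {k U V : Type*} [Field k] [AddCommGroup U] [Module k U] [AddCommGroup V] [Module k V]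

def restrictQuot (B : Submodule k U) (A : Submodule k V) :
    (U →ₗ[k] V) →ₗ[k] (B →ₗ[k] V ⧸ A) :=
  LinearMap.lcomp k _ B.subtype ∘ₗ LinearMap.llcomp k U V _ A.mkQ

@[simp]
lemma restrictQuot_apply (B : Submodule k U) (A : Submodule k V) (f : U →ₗ[k] V) (u : B) :
    restrictQuot B A f u = Submodule.Quotient.mk (f u) :=
  rfl

lemma ker_restrictQuot (B : Submodule k U) (A : Submodule k V) :
    LinearMap.ker (restrictQuot B A) = mapsInto B A := by
  ext f
  simp [LinearMap.ext_iff, Submodule.Quotient.mk_eq_zero, mapsInto]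

lemma exists_mem_map_restrictQuot_apply_eq {B : Submodule k U} {A : Submodule k V}
    {W : Submodule k (U →ₗ[k] V)} (hW : ∀ u : U, u ≠ 0 → ∀ v : V, ∃ f ∈ W, f u = v)
    (u : B) (hu : u ≠ 0) (w : V ⧸ A) : ∃ g ∈ W.map (restrictQuot B A), g u = w := by
  obtain ⟨v, rfl⟩ := Submodule.Quotient.mk_surjective A w
  obtain ⟨f, hfW, hfu⟩ := hW u (by simpa using hu) v
  exact ⟨_, Submodule.mem_map_of_mem hfW, by simp [hfu]⟩

end RestrictQuot

theorem dim_mapsInto_le_general {k U V : Type*} [Field k] [IsAlgClosed k]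
    [AddCommGroup U] [Module k U] [AddCommGroup V] [Module k V]
    [FiniteDimensional k U] [FiniteDimensional k V]
    (r s a b t : ℕ)
    (hV : finrank k V = s)
    (B : Submodule k U) (hBdim : finrank k B = r - b) (hb : b < r)
    (A : Submodule k V) (hAdim : finrank k A = a) (ha : a < s)
    (W : Submodule k (U →ₗ[k] V)) (hW : finrank k W = t)
    (htrans : ∀ u : U, u ≠ 0 → ∀ v : V, ∃ f ∈ W, f u = v) :
    (finrank k ↥(W ⊓ mapsInto B A) : ℤ) ≤ (t : ℤ) - r - s + a + b + 1 := by
  have hquot : finrank k (V ⧸ A) = s - a := by rw [A.finrank_quotient, hV, hAdim]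
  have hmap := finrank_add_finrank_le_of_forall_exists_apply_eq (W.map (restrictQuot B A))
    (by omega) (by omega) (exists_mem_map_restrictQuot_apply_eq htrans)
  have hsplit := W.finrank_inf_ker_add_finrank_map (restrictQuot B A)
  rw [ker_restrictQuot] at hsplit
  omega

/-- **Technical lemma on transitive spaces of linear maps.**
Let `U, V` be vector spaces of dimensions `r, s` over an algebraically closed field `k`,
`B ⊆ U` a nonzero subspace of codimension `b < r`, `A ⊆ V` a subspace of dimension
`a < s`, and `W ⊆ Hom(U, V)` a `t`-dimensional subspace such that for every nonzero
`u ∈ U` and every `v ∈ V` there is `f ∈ W` with `f u = v`.  Then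
`dim {f ∈ W | f(B) ⊆ A} ≤ t - r - s + a + b + 1`. -/
theorem dim_mapsInto_le {k U V : Type*} [Field k] [IsAlgClosed k]
    [AddCommGroup U] [Module k U] [AddCommGroup V] [Module k V]
    [FiniteDimensional k U] [FiniteDimensional k V]
    (r s a b t : ℕ)
    (hU : finrank k U = r) (hV : finrank k V = s)
    (B : Submodule k U) (hB : B ≠ ⊥) (hBdim : finrank k B = r - b) (hb : b < r)
    (A : Submodule k V) (hAdim : finrank k A = a) (ha : a < s)
    (W : Submodule k (U →ₗ[k] V)) (hW : finrank k W = t)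
    (htrans : ∀ u : U, u ≠ 0 → ∀ v : V, ∃ f ∈ W, f u = v) :
    (finrank k ↥(W ⊓ mapsInto B A) : ℤ) ≤ (t : ℤ) - r - s + a + b + 1 :=
  dim_mapsInto_le_general r s a b t hV B hBdim hb A hAdim ha W hW htrans
end

section
/- Let $S$ be a 2-dimensional vector space and $V$ an $(n+1)$-dimensional vector space over an algebraically closed field, and let $T_0^* \subseteq S^* \otimes V^*$ be a $t$-dimensional subspace such that for every nonzero $u \in V$ and every $v \in S^*$ there is $f \in T_0^*$ (viewed as a map $V \to S^*$) with $f(u) = v$. Then the intersection of $\mathbb{P}(T_0)$ with the Segre variety $\mathbb{P}(S) \times \mathbb{P}(V)$ inside $\mathbb{P}(S \otimes V)$ is a smooth variety of dimension exactly $t - n - 1$, i.e., a smooth complete intersection of the Segre variety with the linear space, hence a smooth rational normal scroll of dimension $t - n - 1$ and degree $n + 1$. -/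
/-! A transitive `W ⊆ Hom(V, S*)` has dimension greater than `dim V = n + 1`: otherwise the
pencil `φ ↦ (x ↦ (f ↦ φ (f x)))` of maps `V → W*` has a singular member over the algebraically
closed field (a generalized eigenvalue), i.e. `x ≠ 0` and `φ ≠ 0` with `φ (f x) = 0` for all
`f ∈ W`, contradicting transitivity. Hence `W` meets the `(n + 1)`-dimensional space `V* ⊗ v` of
rank-one maps inside the `2 (n + 1)`-dimensional `Hom(V, S*)`.

The tangent space at `h ⊗ v` is the kernel of `f ↦ (f|ker h mod v) ∈ Hom(ker h, S*/⟨v⟩)`, an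
`n`-dimensional target. Transitivity makes the restriction of this map to `W` surjective, so the
tangent space meets `W` in codimension exactly `n`. -/

open Module

variable {k S : Type*} [Field k] [AddCommGroup S] [Module k S]

/-- The (affine cone over the) embedded tangent space to the Segre variety of rank-one
maps at the rank-one point `h ⊗ v`. -/
def segreTangent {n : ℕ} (h : (Fin (n + 1) → k) →ₗ[k] k) (v : S →ₗ[k] k) :
    Submodule k ((Fin (n + 1) → k) →ₗ[k] (S →ₗ[k] k)) where
  carrier := {f | ∀ x, h x = 0 → f x ∈ Submodule.span k {v}}
  add_mem' := fun hf hg x hx => by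
    simpa using Submodule.add_mem _ (hf x hx) (hg x hx)
  zero_mem' := fun x _ => by simp
  smul_mem' := fun c f hf x hx => by simpa using Submodule.smul_mem _ c (hf x hx)

section

variable {V U E : Type*} [AddCommGroup V] [Module k V] [AddCommGroup U] [Module k U]
  [AddCommGroup E] [Module k E]

theorem Module.End.exists_apply_eq_smul_apply_of_injective [IsAlgClosed k]
    [FiniteDimensional k V] [Nontrivial V] (A B : End k V) (hB : Function.Injective B) :
    ∃ μ : k, ∃ x ≠ 0, A x = μ • B x := by
  let e := LinearEquiv.ofInjectiveEndo B hB
  obtain ⟨μ, hμ⟩ := Module.End.exists_eigenvalue (e.symm.toLinearMap ∘ₗ A)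
  obtain ⟨x, hx⟩ := hμ.exists_hasEigenvector
  refine ⟨μ, x, hx.2, ?_⟩
  calc A x = e (e.symm (A x)) := (e.apply_symm_apply _).symm
    _ = e (μ • x) := congrArg e hx.apply_eq_smul
    _ = μ • B x := by rw [map_smul]; rfl

theorem exists_ne_zero_apply_eq_zero_of_finrank_le [IsAlgClosed k] [FiniteDimensional k V]
    [Nontrivial V] [FiniteDimensional k U] (hE : finrank k E = 2) (P : E →ₗ[k] V →ₗ[k] U)
    (hUV : finrank k U ≤ finrank k V) :
    ∃ e ≠ 0, ∃ x ≠ 0, P e x = 0 := by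
  have : FiniteDimensional k E := Module.finite_of_finrank_eq_succ hE
  obtain ⟨ι, hι⟩ := finrank_le_iff_exists_linearMap.mp hUV
  let b := finBasisOfFinrankEq k E hE
  by_cases hB : Function.Injective (ι ∘ₗ P (b 1))
  · obtain ⟨μ, x, hx, hAB⟩ :=
      Module.End.exists_apply_eq_smul_apply_of_injective (ι ∘ₗ P (b 0)) _ hB
    refine ⟨b 0 - μ • b 1, fun h0 => ?_, x, hx, hι ?_⟩
    · simpa [b.repr_self, Finsupp.single_apply] using congrArg (fun y => b.repr y 0) h0
    · simpa [sub_eq_zero] using hAB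
  · rw [injective_iff_map_eq_zero] at hB
    push Not at hB
    obtain ⟨x, hx0, hx⟩ := hB
    exact ⟨b 1, b.ne_zero 1, x, hx, hι (by simpa using hx0)⟩

theorem finrank_lt_finrank_of_forall_exists_apply_eq [IsAlgClosed k] [FiniteDimensional k V]
    [Nontrivial V] (hE : finrank k E = 2) (W : Submodule k (V →ₗ[k] E))
    (hW : ∀ x : V, x ≠ 0 → ∀ e : E, ∃ f ∈ W, f x = e) :
    finrank k V < finrank k W := by
  have : FiniteDimensional k E := Module.finite_of_finrank_eq_succ hE
  by_contra! hle
  let P : Dual k E →ₗ[k] V →ₗ[k] Dual k W :=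
    LinearMap.lcomp k (Dual k W) (LinearMap.applyₗ.compl₂ W.subtype) ∘ₗ LinearMap.llcomp k W E k
  obtain ⟨φ, hφ, x, hx, hPx⟩ := exists_ne_zero_apply_eq_zero_of_finrank_le
    (by rwa [Subspace.dual_finrank_eq]) P (by rwa [Subspace.dual_finrank_eq])
  obtain ⟨e, he⟩ : ∃ e, φ e ≠ 0 := by
    by_contra! h0
    exact hφ (LinearMap.ext h0)
  obtain ⟨f, hf, rfl⟩ := hW x hx e
  exact he (LinearMap.congr_fun hPx ⟨f, hf⟩)

theorem exists_smulRight_mem_of_finrank_lt [FiniteDimensional k V] (hE : finrank k E = 2)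
    (W : Submodule k (V →ₗ[k] E)) (hW : finrank k V < finrank k W) {v : E} (hv : v ≠ 0) :
    ∃ h : Dual k V, h ≠ 0 ∧ h.smulRight v ∈ W := by
  have : FiniteDimensional k E := Module.finite_of_finrank_eq_succ hE
  have hinj : Function.Injective (LinearMap.smulRightₗ.flip v : Dual k V →ₗ[k] V →ₗ[k] E) := by
    rw [injective_iff_map_eq_zero]
    intro h h0
    ext x
    simpa [hv] using LinearMap.congr_fun h0 x
  have hmeet : ¬ Disjoint W (LinearMap.range (LinearMap.smulRightₗ.flip v)) := by
    intro hd
    have := Submodule.finrank_add_finrank_le_of_disjoint hd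
    rw [LinearMap.finrank_range_of_inj hinj, Subspace.dual_finrank_eq,
      Module.finrank_linearMap k k V E, hE] at this
    omega
  obtain ⟨_, ⟨hfW, h, rfl⟩, hne⟩ :=
    Submodule.exists_mem_ne_zero_of_ne_bot (disjoint_iff.not.mp hmeet)
  exact ⟨h, fun h0 => hne (by simp [h0]), hfW⟩

theorem Submodule.finrank_inf_ker_add_finrank {M N : Type*} [AddCommGroup M] [Module k M]
    [AddCommGroup N] [Module k N] [FiniteDimensional k M] (Φ : M →ₗ[k] N) (W : Submodule k M)
    (hW : W.map Φ = ⊤) :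
    finrank k ↥(W ⊓ LinearMap.ker Φ) + finrank k N = finrank k W := by
  have hsup : W ⊔ LinearMap.ker Φ = ⊤ := by
    rw [← Submodule.comap_map_eq, hW, Submodule.comap_top]
  have hrange : LinearMap.range Φ = ⊤ := top_le_iff.mp (hW ▸ LinearMap.map_le_range)
  have hrank := LinearMap.finrank_range_add_finrank_ker Φ
  have hmeet := Submodule.finrank_sup_add_finrank_inf_eq W (LinearMap.ker Φ)
  rw [hrange, finrank_top] at hrank
  rw [hsup, finrank_top] at hmeet
  omega

theorem Submodule.eq_top_of_forall_exists_apply_ne_zero [FiniteDimensional k V]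
    (hU : finrank k U = 1) (M : Submodule k (V →ₗ[k] U))
    (hM : ∀ x : V, x ≠ 0 → ∃ g ∈ M, g x ≠ 0) : M = ⊤ := by
  have : FiniteDimensional k U := Module.finite_of_finrank_eq_succ hU
  have hev : Function.Injective (LinearMap.applyₗ.compl₂ M.subtype : V →ₗ[k] M →ₗ[k] U) := by
    rw [injective_iff_map_eq_zero]
    intro x hx
    by_contra hx0
    obtain ⟨g, hg, hgx⟩ := hM x hx0
    exact hgx (LinearMap.congr_fun hx ⟨g, hg⟩)
  have hle := LinearMap.finrank_le_finrank_of_injective hev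
  rw [Module.finrank_linearMap k k, hU, mul_one] at hle
  refine Submodule.eq_top_of_finrank_eq (le_antisymm (Submodule.finrank_le M) ?_)
  rwa [Module.finrank_linearMap k k, hU, mul_one]

def restrictMkQ (K : Submodule k V) (L : Submodule k E) : (V →ₗ[k] E) →ₗ[k] K →ₗ[k] E ⧸ L :=
  LinearMap.llcomp k K E (E ⧸ L) L.mkQ ∘ₗ LinearMap.lcomp k E K.subtype

theorem mem_ker_restrictMkQ {K : Submodule k V} {L : Submodule k E} {f : V →ₗ[k] E} :
    f ∈ LinearMap.ker (restrictMkQ K L) ↔ ∀ x ∈ K, f x ∈ L := by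
  simp [restrictMkQ, LinearMap.ext_iff, Submodule.Quotient.mk_eq_zero]

theorem finrank_inf_ker_restrictMkQ_add_finrank [FiniteDimensional k V] (hE : finrank k E = 2)
    (W : Submodule k (V →ₗ[k] E)) (hW : ∀ x : V, x ≠ 0 → ∀ e : E, ∃ f ∈ W, f x = e)
    {h : Dual k V} (hh : h ≠ 0) {v : E} (hv : v ≠ 0) :
    finrank k ↥(W ⊓ LinearMap.ker (restrictMkQ (LinearMap.ker h) (k ∙ v))) + finrank k V =
      finrank k W + 1 := by
  have : FiniteDimensional k E := Module.finite_of_finrank_eq_succ hE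
  have hQ : finrank k (E ⧸ k ∙ v) = 1 := by
    have := Submodule.finrank_quotient_add_finrank (k ∙ v)
    rw [finrank_span_singleton hv, hE] at this
    omega
  obtain ⟨e, -, he⟩ : ∃ e ∈ (⊤ : Submodule k E), e ∉ k ∙ v := by
    refine SetLike.exists_of_lt (lt_top_iff_ne_top.mpr fun htop => ?_)
    have := finrank_span_singleton (K := k) hv
    rw [htop, finrank_top, hE] at this
    omega
  have hmap : W.map (restrictMkQ (LinearMap.ker h) (k ∙ v)) = ⊤ := by
    refine Submodule.eq_top_of_forall_exists_apply_ne_zero hQ _ fun x hx => ?_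
    obtain ⟨f, hf, hfx⟩ := hW x (by simpa using hx) e
    refine ⟨_, Submodule.mem_map_of_mem hf, ?_⟩
    simpa [restrictMkQ, Submodule.Quotient.mk_eq_zero, hfx] using he
  have := Submodule.finrank_inf_ker_add_finrank _ W hmap
  rw [Module.finrank_linearMap k k, hQ, mul_one] at this
  have := Module.Dual.finrank_ker_add_one_of_ne_zero hh
  omega

end

theorem segreTangent_eq_ker_restrictMkQ {n : ℕ} (h : (Fin (n + 1) → k) →ₗ[k] k)
    (v : S →ₗ[k] k) :
    segreTangent h v = LinearMap.ker (restrictMkQ (LinearMap.ker h) (k ∙ v)) := by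
  ext f
  rw [mem_ker_restrictMkQ]
  rfl

theorem segre_section_smooth_scroll_general {n t : ℕ} [IsAlgClosed k]
    (hS : finrank k S = 2)
    (W : Submodule k ((Fin (n + 1) → k) →ₗ[k] (S →ₗ[k] k)))
    (hW : finrank k W = t)
    (htrans : ∀ u : Fin (n + 1) → k, u ≠ 0 → ∀ v : S →ₗ[k] k,
      ∃ f ∈ W, f u = v) :
    (∃ (h : (Fin (n + 1) → k) →ₗ[k] k) (v : S →ₗ[k] k),
        h ≠ 0 ∧ v ≠ 0 ∧ h.smulRight v ∈ W)
    ∧ (∀ (h : (Fin (n + 1) → k) →ₗ[k] k) (v : S →ₗ[k] k),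
        h ≠ 0 → v ≠ 0 → h.smulRight v ∈ W →
        (finrank k ↥(W ⊓ segreTangent h v) : ℤ) - 1 = (t : ℤ) - n - 1) := by
  have hE : finrank k (Dual k S) = 2 := by rw [Subspace.dual_finrank_eq, hS]
  refine ⟨?_, fun h v hh hv _ => ?_⟩
  · have : Nontrivial (Dual k S) := Module.nontrivial_of_finrank_pos (R := k) (by omega)
    obtain ⟨v, hv⟩ := exists_ne (0 : Dual k S)
    obtain ⟨h, hh, hmem⟩ := exists_smulRight_mem_of_finrank_lt hE W
      (finrank_lt_finrank_of_forall_exists_apply_eq hE W htrans) hv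
    exact ⟨h, v, hh, hv, hmem⟩
  · have hdim : finrank k ↥(W ⊓ segreTangent h v) + finrank k (Fin (n + 1) → k) =
        finrank k W + 1 := by
      rw [segreTangent_eq_ker_restrictMkQ]
      exact finrank_inf_ker_restrictMkQ_add_finrank hE W htrans hh hv
    rw [Module.finrank_fin_fun, hW] at hdim
    omega

/-- **Theorem (teoremon)(iv), geometric form.**  Let `S` be `2`-dimensional and `V`
be `(n+1)`-dimensional over an algebraically closed field, and let
`T₀* ⊆ S* ⊗ V* = Hom(V, S*)` be a `t`-dimensional subspace such that for every nonzero
`u ∈ V` and every `v ∈ S*` some `f ∈ T₀*` has `f u = v`.  Then the intersection of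
`ℙ(T₀)` with the Segre variety `ℙ(S) × ℙ(V)` inside `ℙ(S ⊗ V)` — the projectivized
locus of rank-one maps in `T₀*` — is a nonempty smooth complete intersection of
dimension exactly `t - n - 1` (hence a smooth rational normal scroll of dimension
`t - n - 1` and degree `n + 1`): there exists a nonzero rank-one map `h ⊗ v ∈ T₀*`,
and at every such point the embedded Zariski tangent space
`{f ∈ T₀* | f(ker h) ⊆ ⟨v⟩}` has projective dimension exactly `t - n - 1`. -/
theorem segre_section_smooth_scroll {n t : ℕ} [IsAlgClosed k] [FiniteDimensional k S]
    (hS : finrank k S = 2)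
    (W : Submodule k ((Fin (n + 1) → k) →ₗ[k] (S →ₗ[k] k)))
    (hW : finrank k W = t)
    (htrans : ∀ u : Fin (n + 1) → k, u ≠ 0 → ∀ v : S →ₗ[k] k,
      ∃ f ∈ W, f u = v) :
    (∃ (h : (Fin (n + 1) → k) →ₗ[k] k) (v : S →ₗ[k] k),
        h ≠ 0 ∧ v ≠ 0 ∧ h.smulRight v ∈ W)
    ∧ (∀ (h : (Fin (n + 1) → k) →ₗ[k] k) (v : S →ₗ[k] k),
        h ≠ 0 → v ≠ 0 → h.smulRight v ∈ W →
        (finrank k ↥(W ⊓ segreTangent h v) : ℤ) - 1 = (t : ℤ) - n - 1) :=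
  segre_section_smooth_scroll_general hS W hW htrans
end
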